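/- Let ω, η ∈ Ω_∞ and let π be the permutation of {0,1,2} swapping 1 and 2 and fixing 0. If the images p(L_ω) and p(L_η) coincide as subsets of (ℤ/2ℤ)^ℕ, then ω = η or ω_i = π(η_i) for all i. -/

import Mathlib

/-!  Common setup: the group `Aut(X*)` of automorphisms of the rooted binary tree,
the Grigorchuk generators `a, b_ω, c_ω, d_ω`, and the subgroups `G_ω`, `L_ω`. -/

/-- Finite words over `X = {0,1}`: vertices of the rooted binary tree. -/
abbrev Word := List Bool

/-- `Aut(X*)`: bijections of the set of words which preserve word length
(hence fix the empty word) and preserve the prefix relation, as a subgroup of the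
permutation group of `Word`. -/
def TreeAut : Subgroup (Equiv.Perm Word) where
  carrier := {g | (∀ w : Word, (g w).length = w.length) ∧
      ∀ u v : Word, u <+: v ↔ g u <+: g v}
  one_mem' := ⟨fun _ => rfl, fun _ _ => Iff.rfl⟩
  mul_mem' := by
    rintro g h ⟨hg1, hg2⟩ ⟨hh1, hh2⟩
    refine ⟨fun w => ?_, fun u v => ?_⟩
    · simpa using (hg1 (h w)).trans (hh1 w)
    · simpa using (hh2 u v).trans (hg2 (h u) (h v))
  inv_mem' := by
    rintro g ⟨hg1, hg2⟩
    refine ⟨fun w => ?_, fun u v => ?_⟩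
    · have := hg1 (g⁻¹ w)
      rw [Equiv.Perm.coe_inv, Equiv.apply_symm_apply] at this
      exact this.symm
    · have := (hg2 (g⁻¹ u) (g⁻¹ v)).symm
      simpa using this

/-- Application of a tree automorphism to a word. -/
def ap (g : ↥TreeAut) (w : Word) : Word := (g : Equiv.Perm Word) w

/-- The root permutation `a` (as a map): `a(0v) = 1v`, `a(1v) = 0v`. -/
def aFun : Word → Word
  | [] => []
  | x :: v => (!x) :: v

/-- The common recursive pattern of the maps `b_ω, c_ω, d_ω`: on `0v` act by the
identity if `ω 0 = k` and by `a` otherwise, on `1v` recurse with the shifted sequence.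
(`k = 2` gives `b`, `k = 1` gives `c`, `k = 0` gives `d`.) -/
def genFun (k : Fin 3) : (ℕ → Fin 3) → Word → Word
  | _, [] => []
  | ω, false :: v => false :: (if ω 0 = k then v else aFun v)
  | ω, true :: v => true :: genFun k (fun n => ω (n + 1)) v

lemma aFun_invol : Function.Involutive aFun := by
  intro w; cases w with
  | nil => rfl
  | cons x v => simp [aFun]

lemma aFun_length : ∀ w : Word, (aFun w).length = w.length := by
  intro w; cases w <;> simp [aFun]

lemma aFun_prefix : ∀ u v : Word, u <+: v → aFun u <+: aFun v := by
  intro u v h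
  cases u with
  | nil => simp [aFun]
  | cons x u' =>
    cases v with
    | nil => simp at h
    | cons y v' =>
      rw [List.cons_prefix_cons] at h
      obtain ⟨rfl, h2⟩ := h
      simpa [aFun, List.cons_prefix_cons] using h2

lemma genFun_length (k : Fin 3) : ∀ (w : Word) (ω : ℕ → Fin 3),
    (genFun k ω w).length = w.length
  | [], _ => rfl
  | false :: v, ω => by
    by_cases h : ω 0 = k <;> simp [genFun, h, aFun_length]
  | true :: v, ω => by
    simp [genFun, genFun_length k v]

lemma genFun_invol (k : Fin 3) : ∀ (w : Word) (ω : ℕ → Fin 3),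
    genFun k ω (genFun k ω w) = w
  | [], _ => rfl
  | false :: v, ω => by
    by_cases h : ω 0 = k <;> simp [genFun, h, aFun_invol v]
  | true :: v, ω => by
    simp [genFun, genFun_invol k v]

lemma genFun_prefix (k : Fin 3) : ∀ (u v : Word) (ω : ℕ → Fin 3),
    u <+: v → genFun k ω u <+: genFun k ω v
  | [], v, ω, _ => by simp [genFun]
  | x :: u', [], ω, h => by simp at h
  | x :: u', y :: v', ω, h => by
    rw [List.cons_prefix_cons] at h
    obtain ⟨rfl, h2⟩ := h
    cases x with
    | false =>
      by_cases h0 : ω 0 = k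
      · simpa [genFun, h0, List.cons_prefix_cons] using h2
      · simpa [genFun, h0, List.cons_prefix_cons] using aFun_prefix u' v' h2
    | true =>
      simpa [genFun, List.cons_prefix_cons] using genFun_prefix k u' v' _ h2

/-- Build an element of `Aut(X*)` from an involutive, length-preserving,
prefix-preserving map. -/
def mkAut (f : Word → Word) (hinv : Function.Involutive f)
    (hlen : ∀ w, (f w).length = w.length)
    (hpre : ∀ u v : Word, u <+: v → f u <+: f v) : ↥TreeAut :=
  ⟨hinv.toPerm, by
    refine ⟨fun w => ?_, fun u v => ⟨fun h => ?_, fun h => ?_⟩⟩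
    · simpa using hlen w
    · simpa using hpre u v h
    · have := hpre _ _ (by simpa using h)
      simpa [hinv u, hinv v] using this⟩

/-- The automorphism `a`. -/
def aAut : ↥TreeAut := mkAut aFun aFun_invol aFun_length aFun_prefix

/-- The automorphism `b_ω`. -/
def bAut (ω : ℕ → Fin 3) : ↥TreeAut :=
  mkAut (genFun 2 ω) (fun w => genFun_invol 2 w ω) (fun w => genFun_length 2 w ω)
    (fun u v h => genFun_prefix 2 u v ω h)

/-- The automorphism `c_ω`. -/
def cAut (ω : ℕ → Fin 3) : ↥TreeAut :=
  mkAut (genFun 1 ω) (fun w => genFun_invol 1 w ω) (fun w => genFun_length 1 w ω)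
    (fun u v h => genFun_prefix 1 u v ω h)

/-- The automorphism `d_ω`. -/
def dAut (ω : ℕ → Fin 3) : ↥TreeAut :=
  mkAut (genFun 0 ω) (fun w => genFun_invol 0 w ω) (fun w => genFun_length 0 w ω)
    (fun u v h => genFun_prefix 0 u v ω h)

/-- `G_ω = ⟨a, b_ω, c_ω, d_ω⟩`. -/
def Ggrp (ω : ℕ → Fin 3) : Subgroup ↥TreeAut :=
  Subgroup.closure {aAut, bAut ω, cAut ω, dAut ω}

/-- `L_ω = ⟨a b_ω, d_ω⟩`. -/
def Lgrp (ω : ℕ → Fin 3) : Subgroup ↥TreeAut :=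
  Subgroup.closure {aAut * bAut ω, dAut ω}

/-- The `n`-fold shift `σⁿω`. -/
def shift (n : ℕ) (ω : ℕ → Fin 3) : ℕ → Fin 3 := fun m => ω (m + n)

/-- `Ω_∞`: sequences in which each of `0, 1, 2` occurs infinitely often. -/
def OmegaInf : Set (ℕ → Fin 3) := {ω | ∀ k : Fin 3, ∀ N : ℕ, ∃ n, N ≤ n ∧ ω n = k}

/-- `g` fixes every word of length `n`. -/
def fixesLevel (g : ↥TreeAut) (n : ℕ) : Prop := ∀ w : Word, w.length = n → ap g w = w

/-- The subgroup of all tree automorphisms acting trivially outside the subtree `uX*`. -/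
def ristSubgroup (u : Word) : Subgroup ↥TreeAut where
  carrier := {g | ∀ w : Word, ¬ u <+: w → ap g w = w}
  one_mem' := by intro w _; rfl
  mul_mem' := by
    intro g h hg hh w hw
    have e1 : ap g w = w := hg w hw
    have e2 : ap h w = w := hh w hw
    simp only [ap] at e1 e2
    show (g : Equiv.Perm Word) ((h : Equiv.Perm Word) w) = w
    rw [e2, e1]
  inv_mem' := by
    intro g hg w hw
    have h1' : ap g w = w := hg w hw
    have h1 : (g : Equiv.Perm Word) w = w := h1'
    show ((g : Equiv.Perm Word))⁻¹ w = w
    conv_lhs => rw [← h1]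
    simp

/-- The subgroup of all tree automorphisms fixing every word of length `n`
(the `n`-th level stabilizer in `Aut(X*)`). -/
def levelStab (n : ℕ) : Subgroup ↥TreeAut where
  carrier := {g | fixesLevel g n}
  one_mem' := by intro w _; rfl
  mul_mem' := by
    intro g h hg hh w hw
    have e1 : ap g w = w := hg w hw
    have e2 : ap h w = w := hh w hw
    simp only [ap] at e1 e2
    show (g : Equiv.Perm Word) ((h : Equiv.Perm Word) w) = w
    rw [e2, e1]
  inv_mem' := by
    intro g hg w hw
    have h1' : ap g w = w := hg w hw
    have h1 : (g : Equiv.Perm Word) w = w := h1'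
    show ((g : Equiv.Perm Word))⁻¹ w = w
    conv_lhs => rw [← h1]
    simp

/-- The rigid level stabilizer `Rist_G(n)`: the subgroup generated by the rigid vertex
stabilizers `Rist_G(u) = G ⊓ ristSubgroup u` over all words `u` of length `n`. -/
def ristLevel (G : Subgroup ↥TreeAut) (n : ℕ) : Subgroup ↥TreeAut :=
  ⨆ u ∈ {u : Word | u.length = n}, G ⊓ ristSubgroup u

/-- `G` acts transitively on each level of the tree. -/
def LevelTransitive (G : Subgroup ↥TreeAut) : Prop :=
  ∀ u v : Word, u.length = v.length → ∃ g ∈ G, ap g u = v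

/-- A set of tree automorphisms acts level transitively on the subtree `vX*`. -/
def LevelTransitiveOn (S : Set ↥TreeAut) (v : Word) : Prop :=
  ∀ u₁ u₂ : Word, u₁.length = u₂.length → ∃ g ∈ S, ap g (v ++ u₁) = v ++ u₂

/-- `L_{n,ω}`: `L_{0,ω} = L_ω` and `L_{n,ω}` is generated by the squares of
elements of `L_{n-1,ω}`. -/
def Lsq (ω : ℕ → Fin 3) : ℕ → Subgroup ↥TreeAut
  | 0 => Lgrp ω
  | n + 1 => Subgroup.closure {x | ∃ y ∈ Lsq ω n, x = y * y}

/-- `g` is active at the word `v`: the section `g_v` acts nontrivially on the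
one-letter words. -/
def IsActive (g : ↥TreeAut) (v : Word) : Prop :=
  ap g (v ++ [false]) ≠ ap g v ++ [false]

open scoped Classical in
/-- `p(g)_n`: the number of words of length `n` at which `g` is active, mod 2
(words of length `n` are enumerated as `List.ofFn f` for `f : Fin n → Bool`). -/
noncomputable def pMap (g : ↥TreeAut) (n : ℕ) : ZMod 2 :=
  (((Finset.univ : Finset (Fin n → Bool)).filter
    (fun f => IsActive g (List.ofFn f))).card : ZMod 2)

/-!
Counting active vertices mod 2 is additive, `p(gh) = p(g) + p(h)`: the product `gh` is active
at `v` iff exactly one of `g` (at `h v`) and `h` (at `v`) is, and `h` permutes every level.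
Hence `p(L_ω)` is the `𝔽₂`-span of `p(a b_ω)` and `p(d_ω)`. The only vertex of level `n + 1`
where `b_ω` or `d_ω` can be active is `1ⁿ0`, so `p(a b_ω) = (1, [ω₀ ≠ 2], [ω₁ ≠ 2], …)` and
`p(d_ω) = (0, [ω₀ ≠ 0], [ω₁ ≠ 0], …)`. Comparing first coordinates, equal spans force
`p(d_ω) = p(d_η)` and `p(a b_ω) = p(a b_η) + e • p(d_η)` for some `e ∈ 𝔽₂`; read letter by
letter this says `ω = η` if `e = 0` and `ω = π ∘ η` if `e = 1`.
-/

lemma image_closure_eq_span {G M : Type*} [Group G] [AddCommGroup M] {n : ℕ} [NeZero n]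
    [Module (ZMod n) M] (f : G → M) (hf : ∀ g h, f (g * h) = f g + f h) (s : Set G) :
    f '' Subgroup.closure s = Submodule.span (ZMod n) (f '' s) := by
  have hf_one : f 1 = 0 := by simpa using hf 1 1
  have hf_inv (g : G) : f g⁻¹ = -f g :=
    eq_neg_of_add_eq_zero_left (by rw [← hf, inv_mul_cancel, hf_one])
  have hf_pow (g : G) (k : ℕ) : f (g ^ k) = k • f g := by
    induction k with
    | zero => simp [hf_one]
    | succ k ih => rw [pow_succ, hf, ih, succ_nsmul]
  apply Set.Subset.antisymm
  · rintro _ ⟨g, hg, rfl⟩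
    induction hg using Subgroup.closure_induction with
    | mem g hg => exact Submodule.subset_span (Set.mem_image_of_mem f hg)
    | one => simp [hf_one]
    | mul g h _ _ hg hh => simpa [hf] using add_mem hg hh
    | inv g _ hg => simpa [hf_inv] using neg_mem hg
  · intro x hx
    induction hx using Submodule.span_induction with
    | mem x hx =>
      obtain ⟨g, hg, rfl⟩ := hx
      exact ⟨g, Subgroup.subset_closure hg, rfl⟩
    | zero => exact ⟨1, one_mem _, hf_one⟩
    | add x y _ _ hx hy =>
      obtain ⟨g, hg, rfl⟩ := hx
      obtain ⟨h, hh, rfl⟩ := hy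
      exact ⟨g * h, mul_mem hg hh, hf g h⟩
    | smul c x _ hx =>
      obtain ⟨g, hg, rfl⟩ := hx
      refine ⟨g ^ c.val, pow_mem hg _, ?_⟩
      rw [hf_pow, ← Nat.cast_smul_eq_nsmul (ZMod n), ZMod.natCast_zmod_val]

instance (g : ↥TreeAut) (v : Word) : Decidable (IsActive g v) :=
  inferInstanceAs (Decidable (_ ≠ _))

lemma ap_mul (g h : ↥TreeAut) (w : Word) : ap (g * h) w = ap g (ap h w) := rfl

lemma ap_injective (g : ↥TreeAut) : Function.Injective (ap g) :=
  (g : Equiv.Perm Word).injective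

lemma length_ap (g : ↥TreeAut) (w : Word) : (ap g w).length = w.length := g.2.1 w

lemma exists_ap_append_singleton (g : ↥TreeAut) (v : Word) (x : Bool) :
    ∃ y, ap g (v ++ [x]) = ap g v ++ [y] := by
  obtain ⟨t, ht⟩ : ap g v <+: ap g (v ++ [x]) := (g.2.2 _ _).mp (List.prefix_append v [x])
  have ht_length : t.length = 1 := by
    have := congrArg List.length ht
    simp only [List.length_append, length_ap, List.length_singleton] at this
    omega
  obtain ⟨y, rfl⟩ := List.length_eq_one_iff.mp ht_length
  exact ⟨y, ht.symm⟩

lemma ap_append_singleton (g : ↥TreeAut) (v : Word) (x : Bool) :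
    ap g (v ++ [x]) = ap g v ++ [x ^^ decide (IsActive g v)] := by
  obtain ⟨y₀, h₀⟩ := exists_ap_append_singleton g v false
  obtain ⟨y₁, h₁⟩ := exists_ap_append_singleton g v true
  have hne : y₀ ≠ y₁ := by
    rintro rfl
    simpa using ap_injective g (h₀.trans h₁.symm)
  have hact : IsActive g v ↔ y₀ = true := by simp [IsActive, h₀]
  cases x <;> cases y₀ <;> cases y₁ <;> simp_all

lemma isActive_mul (g h : ↥TreeAut) (v : Word) :
    IsActive (g * h) v ↔ ¬(IsActive g (ap h v) ↔ IsActive h v) := by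
  rw [IsActive, ap_mul, ap_mul, ap_append_singleton, ap_append_singleton]
  by_cases hg : IsActive g (ap h v) <;> by_cases hh : IsActive h v <;> simp [hg, hh]

lemma exists_levelEquiv (h : ↥TreeAut) (n : ℕ) :
    ∃ T : (Fin n → Bool) ≃ (Fin n → Bool), ∀ f, List.ofFn (T f) = ap h (List.ofFn f) := by
  let T (f : Fin n → Bool) : Fin n → Bool := fun i =>
    (ap h (List.ofFn f))[i.val]'(by simp [length_ap])
  have hT (f : Fin n → Bool) : List.ofFn (T f) = ap h (List.ofFn f) :=
    List.ext_getElem (by simp [length_ap]) (by simp [T])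
  have T_injective : Function.Injective T := fun f₁ f₂ e =>
    List.ofFn_injective (ap_injective h (by rw [← hT, ← hT, e]))
  exact ⟨Equiv.ofBijective T (Finite.injective_iff_bijective.mp T_injective), hT⟩

lemma pMap_eq_sum (g : ↥TreeAut) (n : ℕ) :
    pMap g n = ∑ f : Fin n → Bool, if IsActive g (List.ofFn f) then 1 else 0 := by
  rw [pMap, Finset.natCast_card_filter]
  congr!

lemma pMap_mul (g h : ↥TreeAut) : pMap (g * h) = pMap g + pMap h := by
  funext n
  obtain ⟨T, hT⟩ := exists_levelEquiv h n
  have indicator_xor (P Q : Prop) [Decidable P] [Decidable Q] :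
      (if ¬(P ↔ Q) then 1 else 0 : ZMod 2) = (if P then 1 else 0) + (if Q then 1 else 0) := by
    by_cases hP : P <;> by_cases hQ : Q <;> simp [hP, hQ]; rfl
  simp only [Pi.add_apply, pMap_eq_sum, isActive_mul, indicator_xor, Finset.sum_add_distrib,
    ← hT]
  -- `h` permutes level `n`, so the `g`-part is `pMap g n` reindexed
  rw [Equiv.sum_comp T (fun f => if IsActive g (List.ofFn f) then 1 else 0)]

lemma pMap_eq_ite {g : ↥TreeAut} {n : ℕ} (w : Word) (hw : w.length = n) {P : Prop} [Decidable P]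
    (hact : ∀ v : Word, v.length = n → (IsActive g v ↔ v = w ∧ P)) :
    pMap g n = if P then 1 else 0 := by
  subst hw
  have hfilter : ∀ f : Fin w.length → Bool, IsActive g (List.ofFn f) ↔ f = w.get ∧ P := by
    intro f
    rw [hact _ (List.length_ofFn), ← List.ofFn_inj, List.ofFn_get]
  rw [pMap_eq_sum]
  simp only [hfilter]
  by_cases hP : P <;> simp [hP]

lemma ap_aAut (w : Word) : ap aAut w = aFun w := rfl

lemma isActive_aAut (v : Word) : IsActive aAut v ↔ v = [] := by
  cases v <;> simp [IsActive, ap_aAut, aFun]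

lemma pMap_aAut : pMap aAut = Pi.single 0 1 := by
  funext n
  cases n with
  | zero => exact pMap_eq_ite [] rfl (P := True) (by simp [isActive_aAut])
  | succ n =>
    rw [Pi.single_apply, if_neg n.succ_ne_zero]
    refine pMap_eq_ite (List.replicate (n + 1) false) (by simp) (P := False) fun v hv => ?_
    simp [isActive_aAut, ← List.length_eq_zero_iff, hv]

def genAut (k : Fin 3) (ω : ℕ → Fin 3) : ↥TreeAut :=
  mkAut (genFun k ω) (fun w => genFun_invol k w ω) (fun w => genFun_length k w ω)
    (fun u v h => genFun_prefix k u v ω h)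

lemma bAut_eq_genAut (ω : ℕ → Fin 3) : bAut ω = genAut 2 ω := rfl

lemma dAut_eq_genAut (ω : ℕ → Fin 3) : dAut ω = genAut 0 ω := rfl

lemma ap_genAut (k : Fin 3) (ω : ℕ → Fin 3) (w : Word) : ap (genAut k ω) w = genFun k ω w := rfl

lemma isActive_genAut_iff (k : Fin 3) : ∀ (ω : ℕ → Fin 3) (v : Word),
    IsActive (genAut k ω) v ↔ ∃ m, v = List.replicate m true ++ [false] ∧ ω m ≠ k
  | ω, [] => by simp [IsActive, ap_genAut, genFun, aFun]
  | ω, false :: v => by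
    have hword (m : ℕ) : false :: v = List.replicate m true ++ [false] ↔ m = 0 ∧ v = [] := by
      cases m <;> simp [List.replicate_succ, eq_comm]
    simp only [hword, exists_eq_left, and_assoc]
    by_cases hk : ω 0 = k
    · simp [IsActive, ap_genAut, genFun, hk]
    · cases v <;> simp [IsActive, ap_genAut, genFun, hk, aFun]
  | ω, true :: v => by
    have hword : ∀ m, true :: v = List.replicate m true ++ [false] ↔
        ∃ m', m = m' + 1 ∧ v = List.replicate m' true ++ [false] := by
      intro m; cases m <;> simp [List.replicate_succ]
    have ih := isActive_genAut_iff k (fun n => ω (n + 1)) v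
    simp only [IsActive, ap_genAut, genFun, List.cons_append, ne_eq, List.cons.injEq,
      true_and] at ih ⊢
    simp [ih, hword]

def genParity (k : Fin 3) (ω : ℕ → Fin 3) : ℕ → ZMod 2
  | 0 => 0
  | n + 1 => if ω n = k then 0 else 1

lemma pMap_genAut (k : Fin 3) (ω : ℕ → Fin 3) : pMap (genAut k ω) = genParity k ω := by
  funext n
  cases n with
  | zero =>
    refine pMap_eq_ite [] rfl (P := False) fun v hv => ?_
    simp [List.length_eq_zero_iff.mp hv, isActive_genAut_iff]
  | succ n =>
    rw [genParity, ← ite_not]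
    refine pMap_eq_ite (List.replicate n true ++ [false]) (by simp) fun v hv => ?_
    rw [isActive_genAut_iff]
    constructor
    · rintro ⟨m, rfl, hm⟩
      obtain rfl : m = n := by simpa using hv
      exact ⟨rfl, hm⟩
    · rintro ⟨rfl, hn⟩
      exact ⟨n, rfl, hn⟩

def pSpan (ω : ℕ → Fin 3) : Submodule (ZMod 2) (ℕ → ZMod 2) :=
  Submodule.span (ZMod 2) {Pi.single 0 1 + genParity 2 ω, genParity 0 ω}

lemma pMap_image_Lgrp (ω : ℕ → Fin 3) : pMap '' (Lgrp ω : Set ↥TreeAut) = pSpan ω := by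
  rw [Lgrp, image_closure_eq_span (n := 2) pMap pMap_mul, Set.image_pair, pMap_mul, pMap_aAut,
    bAut_eq_genAut, dAut_eq_genAut, pMap_genAut, pMap_genAut, pSpan]

lemma exists_eq_of_mem_pSpan {ω : ℕ → Fin 3} {x : ℕ → ZMod 2} (hx : x ∈ pSpan ω) :
    ∃ e : ZMod 2, x = x 0 • (Pi.single 0 1 + genParity 2 ω) + e • genParity 0 ω := by
  obtain ⟨c, e, rfl⟩ := Submodule.mem_span_pair.mp hx
  exact ⟨e, by simp [genParity]⟩

lemma genParity_mem_pSpan (ω : ℕ → Fin 3) : genParity 0 ω ∈ pSpan ω :=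
  Submodule.subset_span (Set.mem_insert_of_mem _ rfl)

lemma single_add_genParity_mem_pSpan (ω : ℕ → Fin 3) :
    Pi.single 0 1 + genParity 2 ω ∈ pSpan ω :=
  Submodule.subset_span (Set.mem_insert _ _)

lemma genParity_zero_eq_of_pSpan_eq {ω η : ℕ → Fin 3} (h : pSpan ω = pSpan η) :
    genParity 0 ω = genParity 0 η := by
  obtain ⟨e, he⟩ := exists_eq_of_mem_pSpan (h ▸ genParity_mem_pSpan ω)
  obtain ⟨e', he'⟩ := exists_eq_of_mem_pSpan (h.symm ▸ genParity_mem_pSpan η)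
  simp only [genParity, zero_smul, zero_add] at he he'
  obtain rfl | rfl : e = 0 ∨ e = 1 := (by decide : ∀ e : ZMod 2, e = 0 ∨ e = 1) e
  · rw [zero_smul] at he
    rw [he, smul_zero] at he'
    rw [he, he']
  · rwa [one_smul] at he

lemma exists_genParity_two_eq_of_pSpan_eq {ω η : ℕ → Fin 3} (h : pSpan ω = pSpan η) :
    ∃ e : ZMod 2, genParity 2 ω = genParity 2 η + e • genParity 0 η := by
  obtain ⟨e, he⟩ := exists_eq_of_mem_pSpan (h ▸ single_add_genParity_mem_pSpan ω)
  have h₀ : (Pi.single 0 1 + genParity 2 ω : ℕ → ZMod 2) 0 = 1 := by simp [genParity]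
  rw [h₀, one_smul, add_assoc] at he
  exact ⟨e, add_left_cancel he⟩

lemma letter_eq_of_parity_eq :
    ∀ a b : Fin 3, ∀ e : ZMod 2, (if a = 0 then 0 else 1 : ZMod 2) = (if b = 0 then 0 else 1) →
      (if a = 2 then 0 else 1 : ZMod 2) = (if b = 2 then 0 else 1) + e * (if b = 0 then 0 else 1) →
      a = if e = 0 then b else Equiv.swap 1 2 b := by
  decide

theorem statement13_general (ω η : ℕ → Fin 3)
    (h : pMap '' (↑(Lgrp ω) : Set ↥TreeAut) = pMap '' (↑(Lgrp η) : Set ↥TreeAut)) :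
    ω = η ∨ ∀ i, ω i = Equiv.swap (1 : Fin 3) 2 (η i) := by
  rw [pMap_image_Lgrp, pMap_image_Lgrp] at h
  have hspan : pSpan ω = pSpan η := SetLike.coe_injective h
  have hd := genParity_zero_eq_of_pSpan_eq hspan
  obtain ⟨e, he⟩ := exists_genParity_two_eq_of_pSpan_eq hspan
  have hcoord (i : ℕ) : ω i = if e = 0 then η i else Equiv.swap 1 2 (η i) := by
    have hdi := congrFun hd (i + 1)
    have hei := congrFun he (i + 1)
    simp only [genParity, Pi.add_apply, Pi.smul_apply, smul_eq_mul] at hdi hei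
    exact letter_eq_of_parity_eq _ _ e hdi hei
  obtain rfl | rfl := (by decide : ∀ e : ZMod 2, e = 0 ∨ e = 1) e
  · exact Or.inl (funext fun i => by simpa using hcoord i)
  · exact Or.inr fun i => by simpa using hcoord i

/-- for `ω, η ∈ Ω_∞`, if `p(L_ω) = p(L_η)` as subsets of `(ℤ/2ℤ)^ℕ`,
then `ω = η` or `ω_i = π(η_i)` for all `i`, where `π = (1 2)`. -/
theorem statement13 (ω η : ℕ → Fin 3) (hω : ω ∈ OmegaInf) (hη : η ∈ OmegaInf)
    (h : pMap '' (↑(Lgrp ω) : Set ↥TreeAut) = pMap '' (↑(Lgrp η) : Set ↥TreeAut)) :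
    ω = η ∨ ∀ i, ω i = Equiv.swap (1 : Fin 3) 2 (η i) :=
  statement13_general ω η h
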